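/- Let v_max > 0 and let b : ℝ → ℝ be a continuously differentiable function with b(0) = 0, b'(x) > 0 for all x ∈ ℝ, and lim_{x → −∞} b(x) = −2ϖ for some real ϖ > 0. Let X > 0 be such that b(−X) = −ϖ, let η := min{ b'(s) : s ∈ [−X, 0] }, and let Λ := 4ϖ/(5·v_max). Then η > 0, and for every s ≤ 0 and every u ∈ ℝ with |u| ≤ Λ, one has (5·v_max/4)·|u|·|s| − s·b(s) ≤ (25·v_max²/(64·η))·u². -/

import Mathlib

/-!
On `[-X, 0]` the mean value theorem gives `b s ≤ η s`, so the left side is at most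
`(5 v_max/4)|u||s| - η s²`, a concave quadratic in `|s|` whose maximum is the right side.
For `s < -X`, monotonicity gives `b s ≤ -ϖ`, and `(5 v_max/4)|u| ≤ ϖ` makes the left side
nonpositive.
-/

open Set

theorem IsCompact.sInf_image_pos {K : Set ℝ} {f : ℝ → ℝ} (hK : IsCompact K)
    (hne : K.Nonempty) (hf : ContinuousOn f K) (hpos : ∀ x ∈ K, 0 < f x) :
    0 < sInf (f '' K) := by
  obtain ⟨x, hx, hfx⟩ := (hK.image_of_continuousOn hf).sInf_mem (hne.image f)
  exact hfx ▸ hpos x hx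

theorem apply_le_mul_of_le_deriv {f : ℝ → ℝ} {a η s : ℝ} (hf : Differentiable ℝ f)
    (hf0 : f 0 = 0) (hderiv : ∀ x ∈ Icc a 0, η ≤ deriv f x) (hs : s ∈ Icc a 0) :
    f s ≤ η * s := by
  have hmvt := (convex_Icc a 0).mul_sub_le_image_sub_of_le_deriv hf.continuous.continuousOn
    hf.differentiableOn (fun x hx => hderiv x (interior_subset hx))
    s hs 0 ⟨hs.1.trans hs.2, le_rfl⟩ hs.2
  linarith

theorem mul_sub_mul_sq_le_sq_div {a t η : ℝ} (hη : 0 < η) :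
    a * t - η * t ^ 2 ≤ a ^ 2 / (4 * η) := by
  rw [le_div_iff₀ (by positivity)]
  nlinarith [sq_nonneg (a - 2 * η * t)]

theorem cruise_controller_gain_estimate (vmax ϖ X : ℝ) (b : ℝ → ℝ)
    (hv : 0 < vmax) (hX : 0 < X)
    (hb : ContDiff ℝ 1 b) (hb0 : b 0 = 0) (hb' : ∀ x : ℝ, 0 < deriv b x)
    (hbX : b (-X) = -ϖ) :
    0 < sInf (deriv b '' Set.Icc (-X) 0) ∧
    ∀ s ≤ (0:ℝ), ∀ u : ℝ, |u| ≤ 4 * ϖ / (5 * vmax) →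
      5 * vmax / 4 * |u| * |s| - s * b s ≤
        25 * vmax ^ 2 / (64 * sInf (deriv b '' Set.Icc (-X) 0)) * u ^ 2 := by
  have hK : IsCompact (Icc (-X) (0:ℝ)) := isCompact_Icc
  have hcont : Continuous (deriv b) := hb.continuous_deriv le_rfl
  set η := sInf (deriv b '' Icc (-X) 0)
  have hη : 0 < η :=
    hK.sInf_image_pos ⟨0, by simp [hX.le]⟩ hcont.continuousOn fun x _ => hb' x
  have hη_le : ∀ x ∈ Icc (-X) 0, η ≤ deriv b x := fun x hx =>
    csInf_le (hK.image hcont).bddBelow (mem_image_of_mem _ hx)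
  refine ⟨hη, fun s hs u hu => ?_⟩
  have hsabs : |s| = -s := abs_of_nonpos hs
  rcases lt_or_ge s (-X) with hsX | hsX
  · have hbs : b s ≤ -ϖ := hbX ▸ (strictMono_of_deriv_pos hb' hsX).le
    have hgain : 5 * vmax / 4 * |u| ≤ ϖ := by
      rw [le_div_iff₀ (by positivity)] at hu
      linarith
    calc 5 * vmax / 4 * |u| * |s| - s * b s ≤ 0 := by
          rw [hsabs]; nlinarith [mul_nonneg (neg_nonneg.mpr hs) (sub_nonneg.mpr hgain)]
      _ ≤ 25 * vmax ^ 2 / (64 * η) * u ^ 2 := by positivity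
  · have hbs : b s ≤ η * s :=
      apply_le_mul_of_le_deriv (hb.differentiable one_ne_zero) hb0 hη_le ⟨hsX, hs⟩
    calc 5 * vmax / 4 * |u| * |s| - s * b s
        ≤ 5 * vmax / 4 * |u| * |s| - η * |s| ^ 2 := by
          rw [hsabs]; nlinarith [mul_le_mul_of_nonpos_left hbs hs]
      _ ≤ (5 * vmax / 4 * |u|) ^ 2 / (4 * η) := mul_sub_mul_sq_le_sq_div hη
      _ = 25 * vmax ^ 2 / (64 * η) * u ^ 2 := by rw [mul_pow, sq_abs]; field_simp; ring
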